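/- arXiv:2208.02036 — 3 statements merged into one kernel-verified Lean document; each statement's English description precedes it below -/
import Mathlib

section
/- If an n-person concave game satisfies strict payoff monotonicity, i.e., ⟨F(s) − F(s'), s − s'⟩ ≤ 0 for all s, s' ∈ S with equality only if s = s', then the game has at most one Nash equilibrium. -/
open scoped RealInnerProductSpace

/-! At a Nash equilibrium every player's payoff is maximal, along their own convex strategy set,
at the equilibrium strategy, so by Fermat's rule the pseudo-gradient `F` satisfies the
variational inequality `⟪F i s, x - s i⟫ ≤ 0` for all `x ∈ S i`. Adding these inequalities for
two equilibria `s₁, s₂` with the roles exchanged gives `∑ i, ⟪F i s₁ - F i s₂, s₁ i - s₂ i⟫ ≥ 0`,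
so strict monotonicity forces `s₁ = s₂`. -/

theorem IsMaxOn.inner_gradient_sub_nonpos {E : Type*} [NormedAddCommGroup E]
    [InnerProductSpace ℝ E] [CompleteSpace E] {f : E → ℝ} {s : Set E} {a x : E}
    (hs : Convex ℝ s) (hmax : IsMaxOn f s a) (hf : DifferentiableAt ℝ f a) (ha : a ∈ s)
    (hx : x ∈ s) : ⟪gradient f a, x - a⟫ ≤ 0 :=
  hmax.localize.hasFDerivWithinAt_nonpos hf.hasGradientAt.hasFDerivAt.hasFDerivWithinAt
    (sub_mem_posTangentConeAt_of_segment_subset (hs.segment_subset ha hx))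

theorem inner_gradient_update_sub_nonpos_of_isMaxOn {ι E : Type*} [DecidableEq ι]
    [NormedAddCommGroup E] [InnerProductSpace ℝ E] [CompleteSpace E] {u : (ι → E) → ℝ}
    {s : ι → E} {i : ι} {K : Set E} {x : E} (hK : Convex ℝ K) (hs : s i ∈ K)
    (hu : DifferentiableAt ℝ (fun y => u (Function.update s i y)) (s i))
    (hbest : ∀ y ∈ K, u (Function.update s i y) ≤ u s) (hx : x ∈ K) :
    ⟪gradient (fun y => u (Function.update s i y)) (s i), x - s i⟫ ≤ 0 := by
  have hmax : IsMaxOn (fun y => u (Function.update s i y)) K (s i) := fun y hy => by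
    simpa only [Set.mem_ofPred_eq, Function.update_eq_self] using hbest y hy
  exact hmax.inner_gradient_sub_nonpos hK hu hs hx

theorem inner_sub_sub_nonneg_of_inner_nonpos {E : Type*} [NormedAddCommGroup E]
    [InnerProductSpace ℝ E] {a b x y : E} (hab : ⟪a, y - x⟫ ≤ 0) (hba : ⟪b, x - y⟫ ≤ 0) :
    0 ≤ ⟪a - b, x - y⟫ := by
  have : ⟪a - b, x - y⟫ = -⟪a, y - x⟫ - ⟪b, x - y⟫ := by
    rw [inner_sub_left, ← neg_sub y x, inner_neg_right]
  linarith

theorem strict_monotonicity_unique_nash_general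
    (n d : ℕ)
    (S : Fin n → Set (EuclideanSpace ℝ (Fin d)))
    (hconv : ∀ i, Convex ℝ (S i))
    (util : Fin n → (Fin n → EuclideanSpace ℝ (Fin d)) → ℝ)
    (hdiff : ∀ i s, Differentiable ℝ fun x => util i (Function.update s i x))
    (F : Fin n → (Fin n → EuclideanSpace ℝ (Fin d)) → EuclideanSpace ℝ (Fin d))
    (hF : ∀ i s, F i s = gradient (fun x => util i (Function.update s i x)) (s i))
    (hmono : ∀ s s' : Fin n → EuclideanSpace ℝ (Fin d),
      (∀ i, s i ∈ S i) → (∀ i, s' i ∈ S i) →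
        ∑ i, ⟪F i s - F i s', s i - s' i⟫ ≤ 0 ∧
          (∑ i, ⟪F i s - F i s', s i - s' i⟫ = 0 → s = s'))
    (s1 s2 : Fin n → EuclideanSpace ℝ (Fin d))
    (hmem1 : ∀ i, s1 i ∈ S i) (hmem2 : ∀ i, s2 i ∈ S i)
    (hnash1 : ∀ i, ∀ x ∈ S i, util i (Function.update s1 i x) ≤ util i s1)
    (hnash2 : ∀ i, ∀ x ∈ S i, util i (Function.update s2 i x) ≤ util i s2) :
    s1 = s2 := by
  have variational_ineq : ∀ s s' : Fin n → EuclideanSpace ℝ (Fin d), (∀ i, s i ∈ S i) →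
      (∀ i, ∀ x ∈ S i, util i (Function.update s i x) ≤ util i s) →
      (∀ i, s' i ∈ S i) → ∀ i, ⟪F i s, s' i - s i⟫ ≤ 0 := fun s s' hs hnash hs' i =>
    hF i s ▸ inner_gradient_update_sub_nonpos_of_isMaxOn (hconv i) (hs i) (hdiff i s _)
      (hnash i) (hs' i)
  obtain ⟨hle, heq⟩ := hmono s1 s2 hmem1 hmem2
  refine heq (le_antisymm hle (Finset.sum_nonneg fun i _ => ?_))
  exact inner_sub_sub_nonneg_of_inner_nonpos (variational_ineq s1 s2 hmem1 hnash1 hmem2 i)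
    (variational_ineq s2 s1 hmem2 hnash2 hmem1 i)

/-- In an `n`-person concave game satisfying strict payoff monotonicity (Rosen's
diagonally strict concavity), there is at most one Nash equilibrium. -/
theorem strict_monotonicity_unique_nash
    (n d : ℕ)
    (S : Fin n → Set (EuclideanSpace ℝ (Fin d)))
    (hcomp : ∀ i, IsCompact (S i)) (hconv : ∀ i, Convex ℝ (S i))
    (util : Fin n → (Fin n → EuclideanSpace ℝ (Fin d)) → ℝ)
    (hconc : ∀ i s, ConcaveOn ℝ Set.univ fun x => util i (Function.update s i x))
    (hdiff : ∀ i s, Differentiable ℝ fun x => util i (Function.update s i x))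
    (F : Fin n → (Fin n → EuclideanSpace ℝ (Fin d)) → EuclideanSpace ℝ (Fin d))
    (hF : ∀ i s, F i s = gradient (fun x => util i (Function.update s i x)) (s i))
    (hFcont : ∀ i, Continuous (F i))
    (hmono : ∀ s s' : Fin n → EuclideanSpace ℝ (Fin d),
      (∀ i, s i ∈ S i) → (∀ i, s' i ∈ S i) →
        ∑ i, ⟪F i s - F i s', s i - s' i⟫ ≤ 0 ∧
          (∑ i, ⟪F i s - F i s', s i - s' i⟫ = 0 → s = s'))
    (s1 s2 : Fin n → EuclideanSpace ℝ (Fin d))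
    (hmem1 : ∀ i, s1 i ∈ S i) (hmem2 : ∀ i, s2 i ∈ S i)
    (hnash1 : ∀ i, ∀ x ∈ S i, util i (Function.update s1 i x) ≤ util i s1)
    (hnash2 : ∀ i, ∀ x ∈ S i, util i (Function.update s2 i x) ≤ util i s2) :
    s1 = s2 :=
  strict_monotonicity_unique_nash_general n d S hconv util hdiff F hF hmono s1 s2 hmem1 hmem2 hnash1
    hnash2
end

section
/- In a game where each player's utility is linear in their own strategy, if s* is a Nash equilibrium that is variationally stable on a neighborhood S of s* (with equality in ⟨F(s), s − s*⟩ ≤ 0 only at s = s*), and s^{br} ≠ s* is another best response of some player i to s*_{-i} (i.e., ũ_i(s^{br}_i, s*_{-i}) = ũ_i(s*)), then the convex combination profile s_λ = λ s* + (1−λ)(s^{br}_i, s*_{-i}) satisfies ⟨F(s_λ), s_λ − s*⟩ = 0 for all λ ∈ [0,1]; hence for λ close to 1 (so s_λ ∈ S), strict variational stability fails unless s_λ = s*, yielding a contradiction. -/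
/-!
Let `v = c_i(s*_{-i})`. Since player `i`'s utility is linear in its own strategy and `v` does not
depend on `s_i`, an equal-utility best response `b` satisfies `⟪v, b - s*_i⟫ = 0`. Moving only
player `i` along the segment from `b` to `s*_i` keeps `F_i = v`, so the variational gap
`∑ j, ⟪F_j(s_λ), s_λ j - s*_j⟫ = (1 - λ) ⟪v, b - s*_i⟫` vanishes identically. For `λ ≠ 1` near `1`
the profile `s_λ` lies in `S` and differs from `s*`, contradicting strict variational stability.
-/

open scoped RealInnerProductSpace
open Filter Topology Function

section

variable {ι E : Type*} [DecidableEq ι] [NormedAddCommGroup E] [InnerProductSpace ℝ E]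

theorem sum_inner_update_sub [Fintype ι] (c : ι → (ι → E) → E) (s : ι → E) (i : ι) (x : E) :
    ∑ j, ⟪c j (update s i x), update s i x j - s j⟫ = ⟪c i (update s i x), x - s i⟫ := by
  rw [Finset.sum_eq_single_of_mem i (Finset.mem_univ i), update_self]
  intro j _ hj
  rw [update_of_ne hj, sub_self, inner_zero_right]

theorem sum_inner_update_segment_eq_zero [Fintype ι] {c : ι → (ι → E) → E} {s : ι → E} {i : ι} {b : E}
    (hc : ∀ x, c i (update s i x) = c i s) (hb : ⟪b, c i s⟫ = ⟪s i, c i s⟫) (lam : ℝ) :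
    ∑ j, ⟪c j (update s i (lam • s i + (1 - lam) • b)),
      update s i (lam • s i + (1 - lam) • b) j - s j⟫ = 0 := by
  have hperp : ⟪c i s, b - s i⟫ = 0 := by
    rw [inner_sub_right, real_inner_comm, hb, real_inner_comm, sub_self]
  have hseg : lam • s i + (1 - lam) • b - s i = (1 - lam) • (b - s i) := by module
  rw [sum_inner_update_sub, hc, hseg, real_inner_smul_right, hperp, mul_zero]

theorem exists_update_segment_mem_ne {S : Set (ι → E)} {s : ι → E} {i : ι} {b : E}
    (hS : S ∈ 𝓝 s) (hb : b ≠ s i) :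
    ∃ lam : ℝ, update s i (lam • s i + (1 - lam) • b) ∈ S ∧
      update s i (lam • s i + (1 - lam) • b) ≠ s := by
  have hpath : Continuous fun lam : ℝ => update s i (lam • s i + (1 - lam) • b) :=
    continuous_const.update i (by fun_prop)
  have hnear : ∀ᶠ lam in 𝓝 (1 : ℝ), update s i (lam • s i + (1 - lam) • b) ∈ S :=
    hpath.continuousAt.preimage_mem_nhds (by simpa using hS)
  obtain ⟨lam, hlamS, hlam⟩ :=
    ((hnear.filter_mono nhdsWithin_le_nhds).and self_mem_nhdsWithin).exists (f := 𝓝[≠] (1 : ℝ))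
  refine ⟨lam, hlamS, fun h => hb ?_⟩
  have hfix : lam • s i + (1 - lam) • b = s i := by simpa using congr_fun h i
  have hzero : (1 - lam) • (b - s i) = 0 := by rw [← sub_eq_zero.mpr hfix]; module
  exact sub_eq_zero.mp ((smul_eq_zero.mp hzero).resolve_left (sub_ne_zero.mpr (Ne.symm hlam)))

end

theorem local_variational_stability_contradiction_general
    (n d : ℕ)
    (c : Fin n → (Fin n → EuclideanSpace ℝ (Fin d)) → EuclideanSpace ℝ (Fin d))
    (hc : ∀ j s s', (∀ j', j' ≠ j → s j' = s' j') → c j s = c j s')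
    (util : Fin n → (Fin n → EuclideanSpace ℝ (Fin d)) → ℝ)
    (hutil : ∀ j s, util j s = ⟪s j, c j s⟫)
    (sstar : Fin n → EuclideanSpace ℝ (Fin d))
    (S : Set (Fin n → EuclideanSpace ℝ (Fin d))) (hS : S ∈ nhds sstar)
    (hVS : ∀ s ∈ S, ∑ j, ⟪c j s, s j - sstar j⟫ ≤ 0 ∧
      (∑ j, ⟪c j s, s j - sstar j⟫ = 0 → s = sstar))
    (i : Fin n) (bri : EuclideanSpace ℝ (Fin d))
    (hne : bri ≠ sstar i)
    (hbr : util i (Function.update sstar i bri) = util i sstar) :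
    (∀ lam ∈ Set.Icc (0 : ℝ) 1,
      ∑ j, ⟪c j (Function.update sstar i (lam • sstar i + (1 - lam) • bri)),
            Function.update sstar i (lam • sstar i + (1 - lam) • bri) j - sstar j⟫
        = 0) ∧ False := by
  have hci : ∀ x, c i (update sstar i x) = c i sstar := fun x =>
    hc i _ _ fun _ hj => update_of_ne hj x sstar
  have hbr' : ⟪bri, c i sstar⟫ = ⟪sstar i, c i sstar⟫ := by
    simpa only [hutil, update_self, hci] using hbr
  have hgap := sum_inner_update_segment_eq_zero hci hbr'
  refine ⟨fun lam _ => hgap lam, ?_⟩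
  obtain ⟨lam, hlamS, hlam⟩ := exists_update_segment_mem_ne hS hne
  exact hlam ((hVS _ hlamS).2 (hgap lam))

/-- In a game with utilities linear in the own strategy, suppose `s*` is a Nash
equilibrium that is variationally stable on a neighborhood `S` of `s*` (with equality
in `⟨F(s), s − s*⟩ ≤ 0` only at `s = s*`), and some player `i` has a best response
`s^br_i ≠ s*_i` to `s*_{-i}` with equal utility. Then every convex combination profile
`s_λ = λ s* + (1−λ)(s^br_i, s*_{-i})` satisfies `⟨F(s_λ), s_λ − s*⟩ = 0`; hence, since
`s_λ ∈ S` for `λ` close to 1 while `s_λ ≠ s*`, strict variational stability fails —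
a contradiction. -/
theorem local_variational_stability_contradiction
    (n d : ℕ)
    (T : Fin n → Set (EuclideanSpace ℝ (Fin d)))
    (c : Fin n → (Fin n → EuclideanSpace ℝ (Fin d)) → EuclideanSpace ℝ (Fin d))
    (hc : ∀ j s s', (∀ j', j' ≠ j → s j' = s' j') → c j s = c j s')
    (util : Fin n → (Fin n → EuclideanSpace ℝ (Fin d)) → ℝ)
    (hutil : ∀ j s, util j s = ⟪s j, c j s⟫)
    (sstar : Fin n → EuclideanSpace ℝ (Fin d)) (hmem : ∀ j, sstar j ∈ T j)
    (hnash : ∀ j, ∀ x ∈ T j, util j (Function.update sstar j x) ≤ util j sstar)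
    (S : Set (Fin n → EuclideanSpace ℝ (Fin d))) (hS : S ∈ nhds sstar)
    (hVS : ∀ s ∈ S, ∑ j, ⟪c j s, s j - sstar j⟫ ≤ 0 ∧
      (∑ j, ⟪c j s, s j - sstar j⟫ = 0 → s = sstar))
    (i : Fin n) (bri : EuclideanSpace ℝ (Fin d)) (hbri : bri ∈ T i)
    (hne : bri ≠ sstar i)
    (hbr : util i (Function.update sstar i bri) = util i sstar) :
    (∀ lam ∈ Set.Icc (0 : ℝ) 1,
      ∑ j, ⟪c j (Function.update sstar i (lam • sstar i + (1 - lam) • bri)),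
            Function.update sstar i (lam • sstar i + (1 - lam) • bri) j - sstar j⟫
        = 0) ∧ False :=
  local_variational_stability_contradiction_general n d c hc util hutil sstar S hS hVS i bri hne hbr
end

section
/- In a two-bidder first-price sealed-bid auction with i.i.d. U[0,1] valuations and constant relative risk aversion utility u = ((v−b)⁺)^ρ with ρ ∈ (0,1], the strategy β(v) = v/(1+ρ) is a symmetric Bayes-Nash equilibrium: for each v ∈ [0,1], the bid b = v/(1+ρ) maximizes (v−b)^ρ · P(opponent's bid < b) = (v−b)^ρ · min((1+ρ)b, 1) over b ∈ [0, v]. -/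
/-! The payoff `(v - b)^ρ · (1 + ρ) b` is, up to the factor `(1 + ρ)/ρ`, the product
`(v - b)^ρ · (ρ b)`. Weighted AM-GM with weights `ρ/(1+ρ)` and `1/(1+ρ)` bounds it by a power of
`(ρ (v - b) + ρ b)/(1 + ρ) = ρ v/(1 + ρ)`, which no longer depends on `b`, with equality exactly
when `v - b = ρ b`, i.e. at `b = v/(1 + ρ)`. The cap `min (·) 1` only lowers the payoff of other
bids and does not bind at `v/(1 + ρ)` since `v ≤ 1`. -/

open Real

theorem rpow_mul_le_weighted_mean_rpow {x y ρ : ℝ} (hx : 0 ≤ x) (hy : 0 ≤ y) (hρ : 0 ≤ ρ) :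
    x ^ ρ * y ≤ ((ρ * x + y) / (1 + ρ)) ^ (1 + ρ) := by
  have hs : 0 < 1 + ρ := by linarith
  have amgm := geom_mean_le_arith_mean2_weighted (div_nonneg hρ hs.le) (one_div_nonneg.2 hs.le)
    hx hy (by rw [← add_div, add_comm, div_self hs.ne'])
  have hmean : ρ / (1 + ρ) * x + 1 / (1 + ρ) * y = (ρ * x + y) / (1 + ρ) := by field_simp
  rw [hmean] at amgm
  calc x ^ ρ * y
      = (x ^ (ρ / (1 + ρ)) * y ^ (1 / (1 + ρ))) ^ (1 + ρ) := by
        rw [mul_rpow (by positivity) (by positivity), ← rpow_mul hx, ← rpow_mul hy,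
          div_mul_cancel₀ _ hs.ne', div_mul_cancel₀ _ hs.ne', rpow_one]
    _ ≤ ((ρ * x + y) / (1 + ρ)) ^ (1 + ρ) := rpow_le_rpow (by positivity) amgm hs.le

theorem isMaxOn_rpow_sub_mul_one_add_mul {ρ : ℝ} (hρ : 0 < ρ) (v : ℝ) :
    IsMaxOn (fun b ↦ (v - b) ^ ρ * ((1 + ρ) * b)) (Set.Icc 0 v) (v / (1 + ρ)) := by
  refine isMaxOn_iff.2 fun b ⟨hb0, hbv⟩ ↦ ?_
  have hs : 0 < 1 + ρ := by linarith
  have hc : v - v / (1 + ρ) = ρ * (v / (1 + ρ)) := by field_simp; ring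
  have hmean : (ρ * (v - b) + ρ * b) / (1 + ρ) = ρ * (v / (1 + ρ)) := by field_simp; ring
  have hc0 : 0 ≤ ρ * (v / (1 + ρ)) := mul_nonneg hρ.le (div_nonneg (hb0.trans hbv) hs.le)
  have amgm := rpow_mul_le_weighted_mean_rpow (sub_nonneg.2 hbv) (mul_nonneg hρ.le hb0) hρ.le
  rw [hmean, rpow_one_add' hc0 hs.ne'] at amgm
  rw [hc]
  calc (v - b) ^ ρ * ((1 + ρ) * b)
      = (1 + ρ) / ρ * ((v - b) ^ ρ * (ρ * b)) := by field_simp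
    _ ≤ (1 + ρ) / ρ * (ρ * (v / (1 + ρ)) * (ρ * (v / (1 + ρ))) ^ ρ) := by gcongr
    _ = (ρ * (v / (1 + ρ))) ^ ρ * ((1 + ρ) * (v / (1 + ρ))) := by field_simp

/-- In the two-bidder FPSB auction with i.i.d. U[0,1] valuations and CRRA utility
`((v−b)⁺)^ρ`, `ρ ∈ (0,1]`, the strategy `β(v) = v/(1+ρ)` is a symmetric BNE: for each
valuation `v`, the bid `v/(1+ρ)` maximizes `(v−b)^ρ · min((1+ρ)b, 1)` over `b ∈ [0,v]`. -/
theorem fpsb_crra_equilibrium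
    (ρ : ℝ) (hρ : ρ ∈ Set.Ioc (0 : ℝ) 1) :
    ∀ v ∈ Set.Icc (0 : ℝ) 1, ∀ b ∈ Set.Icc (0 : ℝ) v,
      (v - b) ^ ρ * min ((1 + ρ) * b) 1 ≤
        (v - v / (1 + ρ)) ^ ρ * min ((1 + ρ) * (v / (1 + ρ))) 1 := by
  rintro v ⟨-, hv1⟩ b ⟨hb0, hbv⟩
  have hs : (1 + ρ) * (v / (1 + ρ)) = v := mul_div_cancel₀ v (by linarith [hρ.1])
  calc (v - b) ^ ρ * min ((1 + ρ) * b) 1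
      ≤ (v - b) ^ ρ * ((1 + ρ) * b) :=
        mul_le_mul_of_nonneg_left (min_le_left _ _) (rpow_nonneg (sub_nonneg.2 hbv) ρ)
    _ ≤ (v - v / (1 + ρ)) ^ ρ * ((1 + ρ) * (v / (1 + ρ))) :=
        isMaxOn_rpow_sub_mul_one_add_mul hρ.1 v ⟨hb0, hbv⟩
    _ = (v - v / (1 + ρ)) ^ ρ * min ((1 + ρ) * (v / (1 + ρ))) 1 := by
        rw [min_eq_left (hs.symm ▸ hv1)]
end
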